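/- If E is not a parent of Y, then S_ICP = PA_Y ∩ (CH_E ∪ PA(AN_Y ∩ CH_E)). -/

import Mathlib

/-!
Every node of a path between `a` and `b` that is open given `C` is an ancestor of `a`, `b` or
a node of `C`. Condition on `C = AN_Y \ T` with `T` containing at most one node `j`, and read an
open path from `Y` to `E`: all its interior nodes are ancestors of `Y`, so its interior
non-colliders lie outside `C`, i.e. equal `j`. The node after `Y` is a parent of `Y` and a
non-collider, hence `j`; the next one is `E` (so `j ∈ CH_E`), or a collider `i ← j` whose next
neighbour is `E` (so `j ∈ PA(AN_Y ∩ CH_E)`), or else a second copy of `j`. Hence `AN_Y` is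
invariant and so is `AN_Y \ {j}` for `j` outside the claimed set. Conversely, the paths
`E → j → Y` and `E → i ← j → Y` must both be blocked; the collider `i` of the second is open,
since blocking the directed path `E → i → ⋯ → Y` puts `i` or a descendant of `i` into the
conditioning set, so `j` lies in every invariant set.
-/

/-- Nodes of the graph: the environment node `E`, predictor nodes `V j` for
`j ∈ {1, …, d}` (represented by `Fin d`), and the response node `Y`. -/
inductive Node (d : ℕ) : Type where
  | E : Node d
  | V : Fin d → Node d
  | Y : Node d
deriving DecidableEq

/-- A directed acyclic graph on `{E} ∪ {1, …, d} ∪ {Y}` in which `E` has no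
parents (`E` is exogenous). -/
structure CGraph (d : ℕ) where
  adj : Node d → Node d → Prop
  acyclic : ∀ v, ¬ Relation.TransGen adj v v
  exogenous : ∀ v, ¬ adj v Node.E

namespace CGraph

variable {d : ℕ} (G : CGraph d)

/-- Undirected adjacency: an edge between `u` and `v` in either direction. -/
def Edge (u v : Node d) : Prop := G.adj u v ∨ G.adj v u

/-- `p` is a path between `a` and `b`: a duplicate-free list of nodes starting
at `a`, ending at `b`, with consecutive nodes adjacent (in either direction). -/
def IsPath (p : List (Node d)) (a b : Node d) : Prop :=
  p.head? = some a ∧ p.getLast? = some b ∧ p.Nodup ∧ p.Chain' G.Edge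

/-- `x` is a (strict) descendant of `v`. -/
def Desc (v x : Node d) : Prop := Relation.TransGen G.adj v x

/-- The consecutive triple `u, m, w` on a path blocks the path given `C`:
either `m` is a non-collider lying in `C`, or `m` is a collider such that
neither `m` nor any of its descendants lies in `C`. -/
def BlockedAt (C : Set (Node d)) (u m w : Node d) : Prop :=
  (¬ (G.adj u m ∧ G.adj w m) ∧ m ∈ C) ∨
  ((G.adj u m ∧ G.adj w m) ∧ m ∉ C ∧ ∀ x, G.Desc m x → x ∉ C)

/-- A path `p` is blocked by `C` if some consecutive triple on it blocks it. -/
def Blocked (C : Set (Node d)) (p : List (Node d)) : Prop :=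
  ∃ q u m w r, p = q ++ u :: m :: w :: r ∧ G.BlockedAt C u m w

/-- `a` and `b` are d-separated given `C`: every path between them is blocked. -/
def DSep (a b : Node d) (C : Set (Node d)) : Prop :=
  ∀ p, G.IsPath p a b → G.Blocked C p

/-- `S ⊆ {1, …, d}` is invariant if `E` and `Y` are d-separated given `S`. -/
def Invariant (S : Set (Fin d)) : Prop := G.DSep Node.E Node.Y (Node.V '' S)

/-- `S` is minimally invariant if it is invariant and no strict subset of `S`
is invariant. -/
def MinInvariant (S : Set (Fin d)) : Prop :=
  G.Invariant S ∧ ∀ S', S' ⊂ S → ¬ G.Invariant S'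

/-- `S_AS`: the union of all minimally invariant sets. -/
def SAS : Set (Fin d) := ⋃₀ {S | G.MinInvariant S}

/-- `S_ICP`: the intersection of all invariant sets (`∅` if there are none). -/
def SICP : Set (Fin d) :=
  {j | (∃ S, G.Invariant S) ∧ ∀ S, G.Invariant S → j ∈ S}

/-- `S_AS^m`: the union of all minimally invariant sets of cardinality `≤ m`. -/
def SASm (m : ℕ) : Set (Fin d) := ⋃₀ {S | G.MinInvariant S ∧ S.ncard ≤ m}

/-- The parents of `Y` among `{1, …, d}`. -/
def paY : Set (Fin d) := {j | G.adj (Node.V j) Node.Y}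

/-- The children of `E` among `{1, …, d}`. -/
def chE : Set (Fin d) := {j | G.adj Node.E (Node.V j)}

/-- The ancestors of `Y` among `{1, …, d}`. -/
def anY : Set (Fin d) := {j | Relation.TransGen G.adj (Node.V j) Node.Y}

/-- `PA(A)`: the union of the parent sets of the elements of `A ⊆ {1, …, d}`. -/
def paOf (A : Set (Fin d)) : Set (Fin d) := {j | ∃ i ∈ A, G.adj (Node.V j) (Node.V i)}

end CGraph

namespace CGraph

variable {d : ℕ} (G : CGraph d) {C : Set (Node d)} {a b u m w v : Node d}

theorem adj_asymm (h : G.adj u v) : ¬ G.adj v u :=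
  fun h' => G.acyclic u (.head h (.single h'))

theorem eq_E_of_reflTransGen (h : Relation.ReflTransGen G.adj v Node.E) : v = Node.E := by
  rcases h.cases_tail with rfl | ⟨_, _, h⟩
  · rfl
  · exact absurd h (G.exogenous _)

variable {G}

theorem Edge.symm (h : G.Edge u v) : G.Edge v u := Or.symm h

theorem blockedAt_comm : G.BlockedAt C u m w ↔ G.BlockedAt C w m u := by
  simp only [BlockedAt, and_comm (a := G.adj u m)]

theorem BlockedAt.mem (h : G.BlockedAt C u m w) (hnc : ¬ (G.adj u m ∧ G.adj w m)) : m ∈ C :=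
  (h.resolve_right fun h' => hnc h'.1).2

theorem BlockedAt.not_exists_reflTransGen (h : G.BlockedAt C u m w) (hu : G.adj u m)
    (hw : G.adj w m) : ¬ ∃ c ∈ C, Relation.ReflTransGen G.adj m c := by
  obtain ⟨-, hm, hdesc⟩ := h.resolve_left fun h' => h'.1 ⟨hu, hw⟩
  rintro ⟨c, hc, hmc⟩
  rcases Relation.reflTransGen_iff_eq_or_transGen.mp hmc with rfl | hmc
  exacts [hm hc, hdesc c hmc hc]

theorem exists_reflTransGen_of_not_blockedAt (h : ¬ G.BlockedAt C u m w) (hu : G.adj u m)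
    (hw : G.adj w m) : ∃ c ∈ C, Relation.ReflTransGen G.adj m c := by
  by_contra hC
  refine h (.inr ⟨⟨hu, hw⟩, fun hm => hC ⟨m, hm, .refl⟩, fun x hx hxC => hC ⟨x, hxC, ?_⟩⟩)
  exact hx.to_reflTransGen

theorem blocked_cons_cons_cons {r : List (Node d)} :
    G.Blocked C (u :: m :: w :: r) ↔ G.BlockedAt C u m w ∨ G.Blocked C (m :: w :: r) := by
  constructor
  · rintro ⟨_ | ⟨x, q⟩, u', m', w', r', he, hb⟩
    · simp only [List.nil_append, List.cons.injEq] at he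
      obtain ⟨rfl, rfl, rfl, -⟩ := he
      exact .inl hb
    · exact .inr ⟨q, u', m', w', r', (List.cons.inj he).2, hb⟩
  · rintro (hb | ⟨q, u', m', w', r', he, hb⟩)
    · exact ⟨[], u, m, w, r, rfl, hb⟩
    · exact ⟨u :: q, u', m', w', r', by rw [he]; rfl, hb⟩

theorem Blocked.three_le_length {p : List (Node d)} (h : G.Blocked C p) : 3 ≤ p.length := by
  obtain ⟨q, u, m, w, r, rfl, -⟩ := h
  simp only [List.length_append, List.length_cons]
  omega

theorem Blocked.append_left {p : List (Node d)} (l : List (Node d)) (h : G.Blocked C p) :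
    G.Blocked C (l ++ p) := by
  obtain ⟨q, u, m, w, r, rfl, hb⟩ := h
  exact ⟨l ++ q, u, m, w, r, by simp, hb⟩

theorem Blocked.reverse {p : List (Node d)} (h : G.Blocked C p) : G.Blocked C p.reverse := by
  obtain ⟨q, u, m, w, r, rfl, hb⟩ := h
  exact ⟨r.reverse, w, m, u, q.reverse, by simp, blockedAt_comm.mp hb⟩

theorem blocked_reverse {p : List (Node d)} : G.Blocked C p.reverse ↔ G.Blocked C p :=
  ⟨fun h => p.reverse_reverse ▸ h.reverse, Blocked.reverse⟩

theorem IsPath.reverse {p : List (Node d)} (hp : G.IsPath p a b) : G.IsPath p.reverse b a :=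
  ⟨by rw [List.head?_reverse, hp.2.1], by rw [List.getLast?_reverse, hp.1],
    List.nodup_reverse.mpr hp.2.2.1, List.isChain_reverse.mpr (hp.2.2.2.imp fun _ _ h => h.symm)⟩

theorem DSep.symm (h : G.DSep a b C) : G.DSep b a C := fun _ hp =>
  blocked_reverse.mp (h _ hp.reverse)

theorem IsPath.ne_of_interior {l₁ l₂ : List (Node d)} (hp : G.IsPath (l₁ ++ v :: l₂) a b)
    (h₁ : l₁ ≠ []) (h₂ : l₂ ≠ []) : v ≠ a ∧ v ≠ b := by
  obtain ⟨hhead, hlast, hnd, -⟩ := hp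
  obtain ⟨x, l₂, rfl⟩ := List.exists_cons_of_ne_nil h₂
  rw [List.head?_append_of_ne_nil _ h₁] at hhead
  rw [List.getLast?_append_cons, List.getLast?_cons_cons] at hlast
  have hv₁ : v ∉ l₁ := fun hv => (List.nodup_append.mp hnd).2.2 v hv v List.mem_cons_self rfl
  have hv₂ : v ∉ x :: l₂ := (List.nodup_cons.mp (List.nodup_append.mp hnd).2.1).1
  exact ⟨fun hva => hv₁ (hva ▸ List.mem_of_mem_head? hhead),
    fun hvb => hv₂ (hvb ▸ List.mem_of_getLast? hlast)⟩

theorem exists_transGen_of_not_blocked_of_adj {r : List (Node d)}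
    (hch : (v :: w :: r).IsChain G.Edge) (hlast : (v :: w :: r).getLast? = some b)
    (hb : ¬ G.Blocked C (v :: w :: r)) (hvw : G.adj v w) :
    ∃ c ∈ insert b C, Relation.TransGen G.adj v c := by
  induction r generalizing v w with
  | nil =>
    obtain rfl : w = b := by simpa using hlast
    exact ⟨w, Set.mem_insert _ _, .single hvw⟩
  | cons x r ih =>
    rw [blocked_cons_cons_cons, not_or] at hb
    rw [List.getLast?_cons_cons] at hlast
    have hch' := (List.isChain_cons_cons.mp hch).2
    rcases (List.isChain_cons_cons.mp hch').1 with hwx | hxw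
    · obtain ⟨c, hc, hwc⟩ := ih hch' hlast hb.2 hwx
      exact ⟨c, hc, .head hvw hwc⟩
    · obtain ⟨c, hc, hwc⟩ := exists_reflTransGen_of_not_blockedAt hb.1 hvw hxw
      exact ⟨c, Set.mem_insert_of_mem _ hc, .head' hvw hwc⟩

theorem IsPath.exists_transGen_of_adj {l₁ l₂ : List (Node d)}
    (hp : G.IsPath (l₁ ++ v :: w :: l₂) a b) (hb : ¬ G.Blocked C (l₁ ++ v :: w :: l₂))
    (hvw : G.adj v w) : ∃ c ∈ insert b C, Relation.TransGen G.adj v c :=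
  exists_transGen_of_not_blocked_of_adj hp.2.2.2.right_of_append
    (by rw [← List.getLast?_append_cons l₁]; exact hp.2.1) (fun h => hb (h.append_left l₁)) hvw

theorem IsPath.exists_reflTransGen_of_not_blocked {p : List (Node d)} (hp : G.IsPath p a b)
    (hb : ¬ G.Blocked C p) (hv : v ∈ p) :
    ∃ c ∈ insert a (insert b C), Relation.ReflTransGen G.adj v c := by
  obtain ⟨l₁, l₂, rfl⟩ := List.append_of_mem hv
  rcases l₂ with _ | ⟨w, l₂⟩
  · obtain rfl : v = b := by simpa using hp.2.1
    exact ⟨v, by simp, .refl⟩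
  rcases (List.isChain_cons_cons.mp hp.2.2.2.right_of_append).1 with hvw | hwv
  · obtain ⟨c, hc, hvc⟩ := hp.exists_transGen_of_adj hb hvw
    exact ⟨c, Set.mem_insert_of_mem _ hc, hvc.to_reflTransGen⟩
  obtain rfl | ⟨l₁, u, rfl⟩ := l₁.eq_nil_or_concat
  · obtain rfl : v = a := by simpa using hp.1
    exact ⟨v, Set.mem_insert _ _, .refl⟩
  rw [List.concat_eq_append, List.append_assoc, List.singleton_append] at hp hb
  rcases (List.isChain_cons_cons.mp hp.2.2.2.right_of_append).1 with huv | hvu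
  · obtain ⟨c, hc, hvc⟩ := exists_reflTransGen_of_not_blockedAt
      (fun h => hb ⟨l₁, u, v, w, l₂, rfl, h⟩) huv hwv
    exact ⟨c, by simp [hc], hvc⟩
  · have hrev : (l₁ ++ u :: v :: w :: l₂).reverse = (w :: l₂).reverse ++ v :: u :: l₁.reverse := by
      simp
    rw [← blocked_reverse, hrev] at hb
    obtain ⟨c, hc, hvc⟩ := (hrev ▸ hp.reverse).exists_transGen_of_adj hb hvu
    exact ⟨c, Set.insert_subset_insert (Set.subset_insert _ _) hc, hvc.to_reflTransGen⟩

theorem isPath_of_isChain_adj {l : List (Node d)} (hl : l.IsChain G.adj) (ha : l.head? = some a)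
    (hb : l.getLast? = some b) : G.IsPath l a b := by
  have hpair : l.Pairwise (Relation.TransGen G.adj) :=
    List.isChain_iff_pairwise.mp (hl.imp fun _ _ h => .single h)
  have hnd : l.Nodup := hpair.imp
    fun {x y} (h : Relation.TransGen G.adj x y) (hxy : x = y) => G.acyclic y (hxy ▸ h)
  exact ⟨ha, hb, hnd, hl.imp fun _ _ => .inl⟩

theorem Blocked.exists_transGen_of_isChain_adj {l : List (Node d)} (hb : G.Blocked C (u :: l))
    (hl : (u :: l).IsChain G.adj) : ∃ c ∈ C, Relation.TransGen G.adj u c := by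
  induction l generalizing u with
  | nil => exact absurd hb.three_le_length (by simp)
  | cons m l ih =>
    rcases l with _ | ⟨w, r⟩
    · exact absurd hb.three_le_length (by simp)
    obtain ⟨hum, hl'⟩ := List.isChain_cons_cons.mp hl
    rcases blocked_cons_cons_cons.mp hb with hb | hb
    · exact ⟨m, hb.mem fun h => G.adj_asymm (List.isChain_cons_cons.mp hl').1 h.2, .single hum⟩
    · obtain ⟨c, hc, hmc⟩ := ih hb hl'
      exact ⟨c, hc, .head hum hmc⟩

theorem DSep.exists_reflTransGen (h : G.DSep a b C) (hav : G.adj a v)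
    (hvb : Relation.ReflTransGen G.adj v b) : ∃ c ∈ C, Relation.ReflTransGen G.adj v c := by
  obtain ⟨l, hl, hlast⟩ := List.exists_isChain_cons_of_relationReflTransGen hvb
  have hbl := h _ (isPath_of_isChain_adj (hl.cons_cons hav) rfl
    (by rw [List.getLast?_cons_cons, List.getLast?_eq_some_getLast (List.cons_ne_nil _ _), hlast]))
  rcases l with _ | ⟨w, r⟩
  · exact absurd hbl.three_le_length (by simp)
  rcases blocked_cons_cons_cons.mp hbl with hbl | hbl
  · exact ⟨v, hbl.mem fun h' => G.adj_asymm (List.isChain_cons_cons.mp hl).1 h'.2, .refl⟩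
  · obtain ⟨c, hc, hvc⟩ := hbl.exists_transGen_of_isChain_adj hl
    exact ⟨c, hc, hvc.to_reflTransGen⟩

section Invariance

variable {T S : Set (Fin d)} {i j : Fin d}

theorem exists_mem_anY_of_interior {l₁ l₂ : List (Node d)}
    (hp : G.IsPath (l₁ ++ v :: l₂) Node.Y Node.E)
    (hb : ¬ G.Blocked (Node.V '' (G.anY \ T)) (l₁ ++ v :: l₂)) (h₁ : l₁ ≠ []) (h₂ : l₂ ≠ []) :
    ∃ k ∈ G.anY, v = Node.V k := by
  obtain ⟨hvY, hvE⟩ := hp.ne_of_interior h₁ h₂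
  obtain ⟨c, hc, hvc⟩ := hp.exists_reflTransGen_of_not_blocked hb
    (List.mem_append_right _ List.mem_cons_self)
  have hvanc : Relation.TransGen G.adj v Node.Y := by
    rcases hc with rfl | rfl | ⟨k, hk, rfl⟩
    · exact (Relation.reflTransGen_iff_eq_or_transGen.mp hvc).resolve_left hvY.symm
    · exact absurd (G.eq_E_of_reflTransGen hvc) hvE
    · exact .trans_right hvc hk.1
  cases v with
  | E => exact absurd rfl hvE
  | V k => exact ⟨k, hvanc, rfl⟩
  | Y => exact absurd rfl hvY

theorem exists_mem_of_not_collider {l₁ r : List (Node d)}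
    (hp : G.IsPath (l₁ ++ u :: m :: w :: r) Node.Y Node.E)
    (hb : ¬ G.Blocked (Node.V '' (G.anY \ T)) (l₁ ++ u :: m :: w :: r))
    (hnc : ¬ (G.adj u m ∧ G.adj w m)) : ∃ k ∈ T, m = Node.V k := by
  have he : l₁ ++ u :: m :: w :: r = (l₁ ++ [u]) ++ m :: w :: r := by simp
  obtain ⟨k, hk, rfl⟩ := exists_mem_anY_of_interior (he ▸ hp) (he ▸ hb) (by simp) (by simp)
  exact ⟨k, by_contra fun hkT => hb ⟨l₁, u, _, w, r, rfl, .inl ⟨hnc, k, ⟨hk, hkT⟩, rfl⟩⟩, rfl⟩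

theorem invariant_anY_diff (hEY : ¬ G.adj Node.E Node.Y) (hT : T.Subsingleton)
    (hTpa : Disjoint T (G.paY ∩ (G.chE ∪ G.paOf (G.anY ∩ G.chE)))) :
    G.Invariant (G.anY \ T) := by
  refine DSep.symm fun p hp => by_contra fun hb => ?_
  obtain ⟨t, rfl⟩ : ∃ t, p = Node.Y :: t := ⟨p.tail, List.eq_cons_of_mem_head? hp.1⟩
  rcases t with _ | ⟨a, _ | ⟨u, t⟩⟩
  · simpa using hp.2.1
  · obtain rfl : a = Node.E := by simpa using hp.2.1
    exact (List.isChain_pair.mp hp.2.2.2).elim (G.exogenous _) hEY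
  obtain ⟨k, hk, rfl⟩ := exists_mem_anY_of_interior (l₁ := [Node.Y]) hp hb (by simp) (by simp)
  have hkY : G.adj (Node.V k) Node.Y :=
    (List.isChain_cons_cons.mp hp.2.2.2).1.resolve_left fun h => G.acyclic _ (.head h hk)
  obtain ⟨k', hk'T, hk'⟩ := exists_mem_of_not_collider (l₁ := []) hp hb
    fun h => G.adj_asymm hkY h.1
  obtain rfl := Node.V.inj hk'
  have hkpa : k ∉ G.chE ∪ G.paOf (G.anY ∩ G.chE) := fun h => Set.disjoint_left.mp hTpa hk'T ⟨hkY, h⟩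
  have hnd := hp.2.2.1
  rcases t with _ | ⟨x, t⟩
  · obtain rfl : u = Node.E := by simpa using hp.2.1
    exact hkpa (.inl ((List.isChain_pair.mp (List.isChain_cons_cons.mp hp.2.2.2).2).resolve_left
      (G.exogenous _)))
  obtain ⟨k₁, hk₁, rfl⟩ :=
    exists_mem_anY_of_interior (l₁ := [Node.Y, Node.V k]) hp hb (by simp) (by simp)
  by_cases hcol : G.adj (Node.V k) (Node.V k₁) ∧ G.adj x (Node.V k₁)
  · rcases t with _ | ⟨y, t⟩
    · obtain rfl : x = Node.E := by simpa using hp.2.1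
      exact hkpa (.inr ⟨k₁, ⟨hk₁, hcol.2⟩, hcol.1⟩)
    · obtain ⟨k₂, hk₂T, rfl⟩ := exists_mem_of_not_collider (l₁ := [Node.Y, Node.V k]) hp hb
        fun h => G.adj_asymm hcol.2 h.1
      obtain rfl := hT hk'T hk₂T
      simp at hnd
  · obtain ⟨k₂, hk₂T, hk₂⟩ := exists_mem_of_not_collider (l₁ := [Node.Y]) hp hb hcol
    obtain rfl := Node.V.inj hk₂
    obtain rfl := hT hk'T hk₂T
    simp at hnd

theorem Invariant.mem_of_mem_paY_of_mem_chE (hS : G.Invariant S) (hj : j ∈ G.paY)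
    (hc : j ∈ G.chE) : j ∈ S := by
  have hb := hS _ (isPath_of_isChain_adj (l := [Node.E, Node.V j, Node.Y])
    (List.isChain_cons_cons.mpr ⟨hc, List.isChain_pair.mpr hj⟩) rfl rfl)
  rcases blocked_cons_cons_cons.mp hb with hb | hb
  · obtain ⟨k, hk, hkj⟩ := hb.mem fun h => G.adj_asymm hj h.2
    exact Node.V.inj hkj ▸ hk
  · exact absurd hb.three_le_length (by simp)

theorem Invariant.mem_of_mem_paY_of_adj (hS : G.Invariant S) (hj : j ∈ G.paY) (hi : i ∈ G.anY)
    (hic : i ∈ G.chE) (hji : G.adj (Node.V j) (Node.V i)) : j ∈ S := by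
  have hij : i ≠ j := by
    rintro rfl
    exact G.acyclic _ (.single hji)
  have hb := hS [Node.E, Node.V i, Node.V j, Node.Y]
    ⟨rfl, rfl, by simp [hij], List.isChain_cons_cons.mpr
      ⟨.inl hic, List.isChain_cons_cons.mpr ⟨.inr hji, List.isChain_pair.mpr (.inl hj)⟩⟩⟩
  rcases blocked_cons_cons_cons.mp hb with hb | hb
  · exact absurd (DSep.exists_reflTransGen hS hic hi.to_reflTransGen)
      (hb.not_exists_reflTransGen hic hji)
  rcases blocked_cons_cons_cons.mp hb with hb | hb
  · obtain ⟨k, hk, hkj⟩ := hb.mem fun h => G.adj_asymm hj h.2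
    exact Node.V.inj hkj ▸ hk
  · exact absurd hb.three_le_length (by simp)

end Invariance

end CGraph

/-- if `E` is not a parent of `Y`, then
`S_ICP = PA_Y ∩ (CH_E ∪ PA(AN_Y ∩ CH_E))`. -/
theorem SICP_characterization {d : ℕ} (G : CGraph d)
    (h : ¬ G.adj Node.E Node.Y) :
    G.SICP = G.paY ∩ (G.chE ∪ G.paOf (G.anY ∩ G.chE)) := by
  ext j
  constructor
  · rintro ⟨-, hall⟩
    by_contra hj
    have hinv := G.invariant_anY_diff h Set.subsingleton_singleton
      (Set.disjoint_singleton_left.mpr hj)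
    exact (hall _ hinv).2 rfl
  · rintro ⟨hpa, hj⟩
    refine ⟨⟨_, G.invariant_anY_diff h Set.subsingleton_empty (Set.empty_disjoint _)⟩,
      fun S hS => ?_⟩
    rcases hj with hc | ⟨i, ⟨hi, hic⟩, hji⟩
    · exact hS.mem_of_mem_paY_of_mem_chE hpa hc
    · exact hS.mem_of_mem_paY_of_adj hpa hi hic hji
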